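/- Let K be a field with a nontrivial Krull valuation v into a linearly ordered abelian group Γ, and let A(x) = Σ_{i=0}^n a_i x^i ∈ K[x] be an Eisenstein–Dumas polynomial at v of degree n. If t ∈ K satisfies n·v(t) > v(a_0) − v(a_n), then A(x+t) is an Eisenstein–Dumas polynomial at v. -/

import Mathlib

open Polynomial

/-- A Krull valuation on a field `K` with values in `Γ ∪ {∞}` (here `WithTop Γ`), where `Γ` is a
linearly ordered abelian group: `v a = ∞ ↔ a = 0`, `v (a*b) = v a + v b`, and
`v (a+b) ≥ min (v a) (v b)`. -/
structure KrullValuation (K : Type*) [Field K] (Γ : Type*) [AddCommGroup Γ] [LinearOrder Γ] [IsOrderedAddMonoid Γ] where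
  v : K → WithTop Γ
  eq_top_iff : ∀ a : K, v a = ⊤ ↔ a = 0
  map_mul : ∀ a b : K, v (a * b) = v a + v b
  min_le_add : ∀ a b : K, min (v a) (v b) ≤ v (a + b)

variable {K : Type*} [Field K] {Γ : Type*} [AddCommGroup Γ] [LinearOrder Γ] [IsOrderedAddMonoid Γ]

/-- The valuation `w` is nontrivial. -/
def KrullValuation.IsNontrivial (w : KrullValuation K Γ) : Prop :=
  ∃ a : K, a ≠ 0 ∧ w.v a ≠ 0

/-- `A` is an Eisenstein–Dumas polynomial of degree `n` at the valuation `w`: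
(D0) `a₀ * aₙ ≠ 0`, (D1) `v(a₀) − v(aₙ) ∉ kΓ` for every integer `k > 1` dividing `n`
(stated as: `v(a₀) ≠ v(aₙ) + k•g` for all `g ∈ Γ`),
(D2) `n·v(aᵢ) ≥ (n−i)·v(a₀) + i·v(aₙ)` for `0 ≤ i ≤ n`. -/
def IsEisensteinDumas (w : KrullValuation K Γ) (n : ℕ) (A : K[X]) : Prop :=
  A.natDegree = n ∧
  A.coeff 0 * A.coeff n ≠ 0 ∧
  (∀ k : ℕ, 1 < k → k ∣ n → ∀ g : Γ,
    w.v (A.coeff 0) ≠ w.v (A.coeff n) + ((k • g : Γ) : WithTop Γ)) ∧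
  (∀ i ≤ n, (n - i) • w.v (A.coeff 0) + i • w.v (A.coeff n) ≤ n • w.v (A.coeff i))

/-! Taylor expansion gives the coefficients of `A(x + t)` as
`b_j = ∑_m C(m + j, j) a_{m+j} t^m`, with `b_n = a_n`. Writing `α = v(a_0)`, `β = v(a_n)`,
condition (D2) for `a_{m+j}` and `n v(t) ≥ α - β` give
`n v(a_{m+j} t^m) ≥ (n - j - m) α + (j + m) β + m (α - β) = (n - j) α + j β`,
which is (D2) for every term of `b_j`. For `j = 0` and `m ≥ 1` the hypothesis on `t` is strict,
so the constant term dominates, `v(b_0) = v(a_0)`, and (D0), (D1) carry over. -/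

lemma WithTop.nsmul_lt_nsmul_right {M : Type*} [AddCommMonoid M] [PartialOrder M]
    [IsOrderedCancelAddMonoid M] {i : ℕ} (hi : i ≠ 0) {x y : WithTop M} (h : x < y) :
    i • x < i • y := by
  induction i with
  | zero => exact absurd rfl hi
  | succ i ih =>
    rcases eq_or_ne i 0 with rfl | hi
    · simpa using h
    · rw [succ_nsmul, succ_nsmul]
      exact WithTop.add_lt_add (ih hi) h

lemma sub_nsmul_add_nsmul_le_nsmul_add_nsmul {M : Type*} [AddCommMonoid M] [PartialOrder M]
    [IsOrderedAddMonoid M] {α β γ τ : M} {n j m : ℕ} (hjm : j + m ≤ n)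
    (hτ : α ≤ n • τ + β) (hγ : (n - (j + m)) • α + (j + m) • β ≤ n • γ) :
    (n - j) • α + j • β ≤ n • (γ + m • τ) :=
  calc (n - j) • α + j • β = (n - (j + m)) • α + j • β + m • α := by
        rw [show n - j = n - (j + m) + m by omega, add_nsmul]; abel
    _ ≤ (n - (j + m)) • α + j • β + m • (n • τ + β) := by gcongr
    _ = (n - (j + m)) • α + (j + m) • β + m • n • τ := by rw [nsmul_add, add_nsmul]; abel
    _ ≤ n • γ + m • n • τ := by gcongr
    _ = n • (γ + m • τ) := by rw [nsmul_add, smul_comm]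

lemma nsmul_lt_nsmul_add_nsmul {M : Type*} [AddCommMonoid M] [PartialOrder M]
    [IsOrderedCancelAddMonoid M] {α β γ τ : WithTop M} {n i : ℕ} (hα : α ≠ ⊤) (hi : i ≠ 0)
    (hin : i ≤ n) (hτ : α < n • τ + β) (hγ : (n - i) • α + i • β ≤ n • γ) :
    n • α < n • (γ + i • τ) := by
  lift α to M using hα
  calc n • (α : WithTop M) = (n - i) • (α : WithTop M) + i • (α : WithTop M) := by
        rw [← add_nsmul, Nat.sub_add_cancel hin]
    _ < (n - i) • (α : WithTop M) + i • (n • τ + β) :=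
        WithTop.add_lt_add_left (by simp [← WithTop.coe_nsmul])
          (WithTop.nsmul_lt_nsmul_right hi hτ)
    _ = (n - i) • (α : WithTop M) + i • β + i • n • τ := by rw [nsmul_add]; abel
    _ ≤ n • γ + i • n • τ := by gcongr
    _ = n • (γ + i • τ) := by rw [nsmul_add, smul_comm]

namespace AddValuation

variable {R Γ₀ : Type*} [CommRing R] [LinearOrderedAddCommMonoidWithTop Γ₀] (v : AddValuation R Γ₀)

lemma map_natCast_nonneg (m : ℕ) : 0 ≤ v m := by
  induction m with
  | zero => simp
  | succ m ih => rw [Nat.cast_succ]; exact v.map_le_add ih v.map_one.ge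

lemma le_nsmul_map_sum {ι : Type*} {s : Finset ι} {f : ι → R} {g : Γ₀} {n : ℕ} (hn : n ≠ 0)
    (hf : ∀ i ∈ s, g ≤ n • v (f i)) : g ≤ n • v (∑ i ∈ s, f i) := by
  have htop : nsmulAddMonoidHom (α := Γ₀) n ⊤ = ⊤ := by
    obtain ⟨k, rfl⟩ := Nat.exists_eq_succ_of_ne_zero hn
    simp [succ_nsmul]
  -- `n • v` is again an additive valuation
  exact (v.map _ htop fun _ _ h => nsmul_le_nsmul_right h n).map_le_sum hf

lemma map_eval_eq_map_coeff_zero {p : R[X]} {x : R}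
    (h : ∀ i ≠ 0, v (p.coeff 0) < v (p.coeff i * x ^ i)) : v (p.eval x) = v (p.coeff 0) := by
  rw [eval_eq_sum_range, Finset.sum_range_succ', pow_zero, mul_one, add_comm,
    v.map_add_eq_of_lt_left]
  exact v.map_lt_sum (h 1 one_ne_zero).ne_top fun i _ => h (i + 1) i.succ_ne_zero

end AddValuation

namespace KrullValuation

variable (w : KrullValuation K Γ)

lemma map_zero : w.v 0 = ⊤ := (w.eq_top_iff 0).2 rfl

lemma map_one : w.v 1 = 0 := by
  have h : w.v 1 + w.v 1 = w.v 1 + 0 := by rw [← w.map_mul, mul_one, add_zero]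
  exact WithTop.add_left_cancel ((w.eq_top_iff 1).not.2 one_ne_zero) h

def toAddValuation : AddValuation K (WithTop Γ) :=
  AddValuation.of w.v w.map_zero w.map_one w.min_le_add w.map_mul

@[simp]
lemma toAddValuation_apply (a : K) : w.toAddValuation a = w.v a := rfl

end KrullValuation

namespace IsEisensteinDumas

variable {w : KrullValuation K Γ} {n : ℕ} {A : K[X]}

lemma ne_zero (hA : IsEisensteinDumas w n A) : n ≠ 0 := by
  rintro rfl
  exact hA.2.2.1 2 one_lt_two (dvd_zero 2) 0 (by simp)

lemma v_eval_eq_v_coeff_zero (hA : IsEisensteinDumas w n A) {t : K}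
    (ht : w.v (A.coeff 0) < n • w.v t + w.v (A.coeff n)) :
    w.v (A.eval t) = w.v (A.coeff 0) := by
  obtain ⟨hdeg, h0n, -, hD2⟩ := hA
  have ha₀ : w.v (A.coeff 0) ≠ ⊤ := (w.eq_top_iff _).not.2 (left_ne_zero_of_mul h0n)
  simp only [← w.toAddValuation_apply] at *
  refine w.toAddValuation.map_eval_eq_map_coeff_zero fun i hi => ?_
  rcases le_or_gt i n with hin | hin
  · rw [AddValuation.map_mul, AddValuation.map_pow]
    exact lt_of_nsmul_lt_nsmul_right n (nsmul_lt_nsmul_add_nsmul ha₀ hi hin ht (hD2 i hin))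
  · rw [coeff_eq_zero_of_natDegree_lt (n := i) (by omega), zero_mul, AddValuation.map_zero]
    exact ha₀.lt_top

lemma le_nsmul_v_taylor_coeff (hA : IsEisensteinDumas w n A) {t : K}
    (ht : w.v (A.coeff 0) ≤ n • w.v t + w.v (A.coeff n)) {j : ℕ} (hj : j ≤ n) :
    (n - j) • w.v (A.coeff 0) + j • w.v (A.coeff n) ≤ n • w.v ((taylor t A).coeff j) := by
  have hn := hA.ne_zero
  obtain ⟨hdeg, -, -, hD2⟩ := hA
  have hdeg' : (hasseDeriv j A).natDegree < n - j + 1 := by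
    have := natDegree_hasseDeriv_le A j
    omega
  simp only [← w.toAddValuation_apply] at *
  rw [taylor_coeff, eval_eq_sum_range' hdeg']
  refine w.toAddValuation.le_nsmul_map_sum hn fun m hm => ?_
  have hjm : j + m ≤ n := by rw [Finset.mem_range] at hm; omega
  rw [hasseDeriv_coeff, mul_assoc, AddValuation.map_mul, AddValuation.map_mul,
    AddValuation.map_pow, add_comm m j]
  calc (n - j) • w.toAddValuation (A.coeff 0) + j • w.toAddValuation (A.coeff n)
      ≤ n • (w.toAddValuation (A.coeff (j + m)) + m • w.toAddValuation t) :=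
        sub_nsmul_add_nsmul_le_nsmul_add_nsmul hjm ht (hD2 _ hjm)
    _ ≤ _ := by grw [← le_add_of_nonneg_left (w.toAddValuation.map_natCast_nonneg _)]

end IsEisensteinDumas

theorem eisensteinDumas_translate_general (w : KrullValuation K Γ)
    (n : ℕ) (A : K[X]) (hA : IsEisensteinDumas w n A) (t : K)
    (ht : w.v (A.coeff 0) < n • w.v t + w.v (A.coeff n)) :
    IsEisensteinDumas w n (A.comp (X + C t)) := by
  have hlead : (taylor t A).coeff n = A.coeff n := by
    rw [← hA.1, coeff_taylor_natDegree, leadingCoeff]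
  have hconst : w.v ((taylor t A).coeff 0) = w.v (A.coeff 0) := by
    rw [taylor_coeff_zero, hA.v_eval_eq_v_coeff_zero ht]
  have h0n := hA.2.1
  rw [← taylor_apply]
  refine ⟨by rw [natDegree_taylor, hA.1], ?_, ?_, ?_⟩
  · rw [hlead]
    refine mul_ne_zero (fun h => left_ne_zero_of_mul h0n ?_) (right_ne_zero_of_mul h0n)
    rw [← w.eq_top_iff, ← hconst, h, w.map_zero]
  · rw [hconst, hlead]
    exact hA.2.2.1
  · intro j hj
    rw [hconst, hlead]
    exact hA.le_nsmul_v_taylor_coeff ht.le hj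

/-- If `A` is an Eisenstein–Dumas polynomial of degree `n` at `v` and `t ∈ K` satisfies
`n·v(t) > v(a₀) − v(aₙ)`, then `A(x+t)` is an Eisenstein–Dumas polynomial at `v`. -/
theorem eisensteinDumas_translate (w : KrullValuation K Γ) (hw : w.IsNontrivial)
    (n : ℕ) (A : K[X]) (hA : IsEisensteinDumas w n A) (t : K)
    (ht : w.v (A.coeff 0) < n • w.v t + w.v (A.coeff n)) :
    IsEisensteinDumas w n (A.comp (X + C t)) :=
  eisensteinDumas_translate_general w n A hA t ht
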